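/- arXiv:1405.7206 — 3 statements merged into one kernel-verified Lean document; each statement's English description precedes it below -/
import Mathlib

section
/- Let n ≥ 1 and let X₁,…,Xₙ be i.i.d. exponential random variables with mean λ > 0. Writing X̄ = (1/n)Σᵢ Xᵢ and S² = Σᵢ (Xᵢ − X̄)², one has E[S⁴] = ((n − 1)(n² + 7n − 6)/n) λ⁴. -/
open MeasureTheory ProbabilityTheory Filter

/-!
With `Q = ∑ Xᵢ²` and `T = ∑ Xᵢ`, the sum of squared deviations is `Q - T² / n`, so
`E[S⁴] = E[Q²] - (2 / n) E[Q T²] + E[T⁴] / n²`. All three are sums of means of monomials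
`∏ Xᵢ ^ eᵢ` in independent variables with `E[Xᵏ] = k! λᵏ`, and multiplying such a monomial by
`X_l ^ k` multiplies its mean by `λᵏ (e_l + 1) ⋯ (e_l + k)`. Summing over `l`, multiplication
by `T` multiplies the mean of a monomial of degree `d` by `λ (n + d)`, so
`E[T^m M] = λ^m (n + d) (n + d + 1) ⋯ (n + d + m - 1) E[M]`. This gives
`E[T⁴] = n(n+1)(n+2)(n+3) λ⁴`, `E[Q T²] = 2n(n+2)(n+3) λ⁴` and `E[Q²] = 4n(n+5) λ⁴`.
-/

open Real Set
open scoped Nat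

namespace ProbabilityTheory

lemma expMeasure_eq_withDensity_restrict {r : ℝ} :
    expMeasure r = (volume.restrict (Ioi 0)).withDensity
      fun x => ENNReal.ofReal (r * exp (-(r * x))) := by
  have : exponentialPDF r = (Ici 0).indicator fun x => ENNReal.ofReal (r * exp (-(r * x))) := by
    ext x
    by_cases hx : 0 ≤ x
    · simp [exponentialPDF_of_nonneg hx, hx]
    · simp [exponentialPDF_of_neg (not_le.1 hx), hx]
  rw [Measure.restrict_congr_set Ioi_ae_eq_Ici, ← withDensity_indicator measurableSet_Ici, ← this]
  rfl

lemma integral_expMeasure {r : ℝ} (hr : 0 < r) (g : ℝ → ℝ) :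
    ∫ x, g x ∂expMeasure r = ∫ x in Ioi 0, r * exp (-(r * x)) * g x := by
  rw [expMeasure_eq_withDensity_restrict, integral_withDensity_eq_integral_toReal_smul
    (by fun_prop) (ae_of_all _ fun _ => ENNReal.ofReal_lt_top)]
  refine integral_congr_ae (ae_of_all _ fun x => ?_)
  simp only [smul_eq_mul]
  rw [ENNReal.toReal_ofReal (by positivity)]

lemma integrable_expMeasure_iff {r : ℝ} (hr : 0 < r) {g : ℝ → ℝ} :
    Integrable g (expMeasure r) ↔ IntegrableOn (fun x => r * exp (-(r * x)) * g x) (Ioi 0) := by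
  rw [expMeasure_eq_withDensity_restrict, integrable_withDensity_iff_integrable_smul'
    (by fun_prop) (ae_of_all _ fun _ => ENNReal.ofReal_lt_top)]
  refine integrable_congr (ae_of_all _ fun x => ?_)
  simp only [smul_eq_mul]
  rw [ENNReal.toReal_ofReal (by positivity)]

lemma integrable_pow_expMeasure {r : ℝ} (hr : 0 < r) (k : ℕ) :
    Integrable (fun x => x ^ k) (expMeasure r) := by
  rw [integrable_expMeasure_iff hr]
  have := (integrableOn_rpow_mul_exp_neg_mul_rpow (p := 1) (s := k)
    (by linarith [(Nat.cast_nonneg k : (0:ℝ) ≤ k)]) one_pos hr).const_mul r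
  refine IntegrableOn.congr_fun this (fun x _ => ?_) measurableSet_Ioi
  simp only [rpow_one, rpow_natCast, neg_mul]
  ring

lemma integral_pow_expMeasure {r : ℝ} (hr : 0 < r) (k : ℕ) :
    ∫ x, x ^ k ∂expMeasure r = k ! / r ^ k := by
  have hGamma := integral_rpow_mul_exp_neg_mul_Ioi (a := k + 1) (by positivity) hr
  rw [add_sub_cancel_right, Gamma_nat_eq_factorial] at hGamma
  rw [integral_expMeasure hr]
  calc ∫ x in Ioi 0, r * exp (-(r * x)) * x ^ k
      = r * ∫ x in Ioi 0, x ^ (k : ℝ) * exp (-(r * x)) := by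
        rw [← integral_const_mul]
        refine setIntegral_congr_fun measurableSet_Ioi fun x _ => ?_
        rw [rpow_natCast]
        ring
    _ = k ! / r ^ k := by
        rw [hGamma, ← Nat.cast_succ, rpow_natCast, one_div, inv_pow, pow_succ]
        field_simp

lemma iIndepFun.integrable_finsetProd {Ω ι : Type*} [MeasurableSpace Ω] {P : Measure Ω}
    {Y : ι → Ω → ℝ} (hY : iIndepFun Y P) (hmeas : ∀ i, Measurable (Y i))
    (hint : ∀ i, Integrable (Y i) P) (s : Finset ι) :
    Integrable (fun ω => ∏ i ∈ s, Y i ω) P := by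
  classical
  have := hY.isProbabilityMeasure
  induction s using Finset.induction_on with
  | empty => simp
  | insert a s ha ih =>
    simp only [Finset.prod_insert ha]
    have := (hY.indepFun_finsetProd_of_notMem hmeas ha).symm.integrable_mul (hint a)
      (by simpa [Finset.prod_fn] using ih)
    simpa [Finset.prod_fn, Pi.mul_def] using this

lemma HasLaw.integrable_pow_of_expMeasure {Ω : Type*} [MeasurableSpace Ω] {P : Measure Ω}
    {Y : Ω → ℝ} {r : ℝ} (hY : HasLaw Y (expMeasure r) P) (hr : 0 < r) (k : ℕ) :
    Integrable (fun ω => Y ω ^ k) P := by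
  have := integrable_pow_expMeasure hr k
  rw [← hY.map_eq] at this
  exact (integrable_map_measure this.aestronglyMeasurable hY.aemeasurable).1 this

lemma HasLaw.integral_pow_of_expMeasure {Ω : Type*} [MeasurableSpace Ω] {P : Measure Ω}
    {Y : Ω → ℝ} {r : ℝ} (hY : HasLaw Y (expMeasure r) P) (hr : 0 < r) (k : ℕ) :
    ∫ ω, Y ω ^ k ∂P = k ! / r ^ k := by
  rw [← integral_pow_expMeasure hr k]
  exact hY.integral_comp (continuous_pow k).aestronglyMeasurable

end ProbabilityTheory

lemma Finset.sum_sub_mean_sq {ι : Type*} (s : Finset ι) (x : ι → ℝ) :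
    ∑ i ∈ s, (x i - (∑ j ∈ s, x j) / s.card) ^ 2
      = ∑ i ∈ s, x i ^ 2 - (∑ i ∈ s, x i) ^ 2 / s.card := by
  rcases s.eq_empty_or_nonempty with rfl | hs
  · simp
  have hcard : (s.card : ℝ) ≠ 0 := by exact_mod_cast hs.card_pos.ne'
  simp only [sub_sq, Finset.sum_add_distrib, Finset.sum_sub_distrib, ← Finset.sum_mul,
    ← Finset.mul_sum, Finset.sum_const, nsmul_eq_mul]
  field_simp
  ring

namespace IIDMoments

variable {Ω ι : Type*} [Fintype ι]

def monomial (X : ι → Ω → ℝ) (e : ι → ℕ) (ω : Ω) : ℝ := ∏ i, X i ω ^ e i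

variable {X : ι → Ω → ℝ}

@[simp]
lemma monomial_zero : monomial X 0 = 1 := by
  ext ω
  simp [monomial]

section Algebra

variable [DecidableEq ι]

lemma monomial_add_single (e : ι → ℕ) (l : ι) (k : ℕ) (ω : Ω) :
    monomial X (e + Pi.single l k) ω = monomial X e ω * X l ω ^ k := by
  simp only [monomial, Pi.add_apply, pow_add, Finset.prod_mul_distrib]
  congr 1
  rw [Fintype.prod_eq_single l fun i hi => by simp [hi]]
  simp

lemma monomial_single (l : ι) (k : ℕ) (ω : Ω) : monomial X (Pi.single l k) ω = X l ω ^ k := by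
  simpa using monomial_add_single (X := X) 0 l k ω

lemma powerSum_mul_monomial (e : ι → ℕ) (k : ℕ) (ω : Ω) :
    (∑ l, X l ω ^ k) * monomial X e ω = ∑ l, monomial X (e + Pi.single l k) ω := by
  simp only [monomial_add_single, ← Finset.mul_sum]
  ring

lemma sum_mul_monomial (e : ι → ℕ) (ω : Ω) :
    (∑ l, X l ω) * monomial X e ω = ∑ l, monomial X (e + Pi.single l 1) ω := by
  simpa using powerSum_mul_monomial e 1 ω

lemma sum_pow_succ_mul_monomial (m : ℕ) (e : ι → ℕ) (ω : Ω) :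
    (∑ l, X l ω) ^ (m + 1) * monomial X e ω
      = ∑ l, (∑ l, X l ω) ^ m * monomial X (e + Pi.single l 1) ω := by
  rw [pow_succ, mul_assoc, sum_mul_monomial, Finset.mul_sum]

lemma sum_sq_mul_eq_sum_mul_monomial (y : ℝ) (ω : Ω) :
    (∑ i, X i ω ^ 2) * y = ∑ i, y * monomial X (Pi.single i 2) ω := by
  rw [Finset.sum_mul]
  exact Finset.sum_congr rfl fun i _ => by rw [monomial_single, mul_comm]

lemma sum_sq_sq_eq_sum_mul_monomial (ω : Ω) :
    (∑ i, X i ω ^ 2) ^ 2 = ∑ i, (∑ l, X l ω ^ 2) * monomial X (Pi.single i 2) ω := by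
  rw [sq, sum_sq_mul_eq_sum_mul_monomial]

end Algebra

variable [MeasurableSpace Ω] {P : Measure Ω}

lemma integrable_monomial (hX : iIndepFun X P) (hmeas : ∀ i, Measurable (X i))
    (hint : ∀ i k, Integrable (fun ω => X i ω ^ k) P) (e : ι → ℕ) :
    Integrable (monomial X e) P :=
  iIndepFun.integrable_finsetProd (hX.comp (fun i x => x ^ e i) fun i => by fun_prop)
    (fun i => (hmeas i).pow_const _) (fun i => hint i (e i)) Finset.univ

lemma integral_monomial (hX : iIndepFun X P) (hmeas : ∀ i, Measurable (X i)) (e : ι → ℕ) :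
    ∫ ω, monomial X e ω ∂P = ∏ i, ∫ ω, X i ω ^ e i ∂P :=
  hX.integral_fun_prod_comp (fun i => (hmeas i).aemeasurable) fun i =>
    (continuous_pow (e i)).aestronglyMeasurable

lemma integrable_powerSum_mul_monomial (hX : iIndepFun X P) (hmeas : ∀ i, Measurable (X i))
    (hint : ∀ i k, Integrable (fun ω => X i ω ^ k) P) (k : ℕ) (e : ι → ℕ) :
    Integrable (fun ω => (∑ l, X l ω ^ k) * monomial X e ω) P := by
  classical
  simp_rw [powerSum_mul_monomial]
  exact integrable_finsetSum _ fun l _ => integrable_monomial hX hmeas hint _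

lemma integrable_sum_pow_mul_monomial (hX : iIndepFun X P) (hmeas : ∀ i, Measurable (X i))
    (hint : ∀ i k, Integrable (fun ω => X i ω ^ k) P) (m : ℕ) (e : ι → ℕ) :
    Integrable (fun ω => (∑ l, X l ω) ^ m * monomial X e ω) P := by
  classical
  induction m generalizing e with
  | zero => simpa using integrable_monomial hX hmeas hint e
  | succ m ih =>
    simp_rw [sum_pow_succ_mul_monomial]
    exact integrable_finsetSum _ fun l _ => ih _

variable {lam : ℝ}

section Single

variable [DecidableEq ι]

lemma integral_monomial_add_single (hX : iIndepFun X P) (hmeas : ∀ i, Measurable (X i))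
    (hmom : ∀ i k, ∫ ω, X i ω ^ k ∂P = k ! * lam ^ k) (e : ι → ℕ) (l : ι) (k : ℕ) :
    ∫ ω, monomial X (e + Pi.single l k) ω ∂P
      = lam ^ k * (e l + 1).ascFactorial k * ∫ ω, monomial X e ω ∂P := by
  have hrest : ∏ i ∈ Finset.univ.erase l, ∫ ω, X i ω ^ (e + Pi.single l k : ι → ℕ) i ∂P
      = ∏ i ∈ Finset.univ.erase l, ∫ ω, X i ω ^ e i ∂P :=
    Finset.prod_congr rfl fun i hi => by simp [Finset.ne_of_mem_erase hi]
  rw [integral_monomial hX hmeas, integral_monomial hX hmeas,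
    ← Finset.mul_prod_erase _ _ (Finset.mem_univ l),
    ← Finset.mul_prod_erase _ _ (Finset.mem_univ l), hrest, hmom, hmom, Pi.add_apply,
    Pi.single_eq_same, ← Nat.factorial_mul_ascFactorial]
  push_cast
  ring

lemma integral_monomial_single (hmom : ∀ i k, ∫ ω, X i ω ^ k ∂P = k ! * lam ^ k)
    (l : ι) (k : ℕ) :
    ∫ ω, monomial X (Pi.single l k) ω ∂P = k ! * lam ^ k := by
  simp only [monomial_single, hmom]

end Single

variable (hX : iIndepFun X P) (hmeas : ∀ i, Measurable (X i))
  (hint : ∀ i k, Integrable (fun ω => X i ω ^ k) P)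
  (hmom : ∀ i k, ∫ ω, X i ω ^ k ∂P = k ! * lam ^ k)
include hX hmeas hint hmom

lemma integral_powerSum_mul_monomial (k : ℕ) (e : ι → ℕ) :
    ∫ ω, (∑ l, X l ω ^ k) * monomial X e ω ∂P
      = lam ^ k * (∑ l, ((e l + 1).ascFactorial k : ℝ)) * ∫ ω, monomial X e ω ∂P := by
  classical
  simp_rw [powerSum_mul_monomial]
  rw [integral_finsetSum _ fun l _ => integrable_monomial hX hmeas hint _]
  simp_rw [integral_monomial_add_single hX hmeas hmom, Finset.mul_sum, Finset.sum_mul]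

lemma integral_sum_pow_mul_monomial (m : ℕ) (e : ι → ℕ) :
    ∫ ω, (∑ l, X l ω) ^ m * monomial X e ω ∂P
      = lam ^ m * (Fintype.card ι + ∑ i, e i).ascFactorial m * ∫ ω, monomial X e ω ∂P := by
  classical
  induction m generalizing e with
  | zero => simp
  | succ m ih =>
    simp_rw [sum_pow_succ_mul_monomial]
    rw [integral_finsetSum _ fun l _ => integrable_sum_pow_mul_monomial hX hmeas hint m _]
    simp_rw [ih, integral_monomial_add_single hX hmeas hmom]
    have hsum : ∀ l, ∑ i, (e + Pi.single l 1 : ι → ℕ) i = ∑ i, e i + 1 := fun l => by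
      simp [Finset.sum_add_distrib]
    have hcount : ∑ l, ((e l : ℝ) + 1) = Fintype.card ι + ∑ i, (e i : ℝ) := by
      simp [Finset.sum_add_distrib, add_comm]
    have hasc : ∀ N : ℕ, N.ascFactorial (m + 1) = N * (N + 1).ascFactorial m := fun N => by
      rw [add_comm m 1, ← Nat.ascFactorial_mul_ascFactorial]
      simp [Nat.ascFactorial_succ]
    simp only [hsum, ← add_assoc, hasc, pow_one, Nat.ascFactorial_succ, Nat.ascFactorial_zero,
      add_zero, mul_one]
    push_cast
    rw [← hcount, Finset.sum_mul, Finset.mul_sum, Finset.sum_mul]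
    refine Finset.sum_congr rfl fun l _ => ?_
    ring

lemma integral_sum_pow_four :
    ∫ ω, (∑ i, X i ω) ^ 4 ∂P
      = Fintype.card ι * (Fintype.card ι + 1) * (Fintype.card ι + 2) * (Fintype.card ι + 3)
        * lam ^ 4 := by
  have : IsProbabilityMeasure P := hX.isProbabilityMeasure
  have h := integral_sum_pow_mul_monomial hX hmeas hint hmom 4 0
  simp only [monomial_zero, Pi.one_apply, mul_one, Pi.zero_apply, Finset.sum_const_zero,
    add_zero, integral_const, probReal_univ, smul_eq_mul, Nat.ascFactorial_succ,
    Nat.ascFactorial_zero] at h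
  rw [h]
  push_cast
  ring

lemma integral_sum_sq_mul_sum_sq :
    ∫ ω, (∑ i, X i ω ^ 2) * (∑ i, X i ω) ^ 2 ∂P
      = 2 * Fintype.card ι * (Fintype.card ι + 2) * (Fintype.card ι + 3) * lam ^ 4 := by
  classical
  simp_rw [sum_sq_mul_eq_sum_mul_monomial]
  rw [integral_finsetSum _ fun i _ => integrable_sum_pow_mul_monomial hX hmeas hint 2 _]
  simp_rw [integral_sum_pow_mul_monomial hX hmeas hint hmom, integral_monomial_single hmom]
  simp [Nat.ascFactorial_succ]
  ring

lemma integral_sum_sq_sq :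
    ∫ ω, (∑ i, X i ω ^ 2) ^ 2 ∂P = 4 * Fintype.card ι * (Fintype.card ι + 5) * lam ^ 4 := by
  classical
  simp_rw [sum_sq_sq_eq_sum_mul_monomial]
  rw [integral_finsetSum _ fun i _ => integrable_powerSum_mul_monomial hX hmeas hint 2 _]
  simp_rw [integral_powerSum_mul_monomial hX hmeas hint hmom, integral_monomial_single hmom]
  have hterm : ∀ i l : ι,
      (((Pi.single i 2 : ι → ℕ) l + 1).ascFactorial 2 : ℝ) = 2 + if l = i then 10 else 0 := by
    intro i l
    by_cases h : l = i
    · subst h; norm_num [Nat.ascFactorial_succ]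
    · simp [h, Nat.ascFactorial_succ]
  simp only [hterm, Finset.sum_add_distrib, Finset.sum_ite_eq', Finset.mem_univ, if_true,
    Finset.sum_const, Finset.card_univ, nsmul_eq_mul]
  norm_num
  ring

lemma integral_sq_sum_sq_sub_mean :
    ∫ ω, (∑ i, (X i ω - (∑ j, X j ω) / Fintype.card ι) ^ 2) ^ 2 ∂P
      = ((Fintype.card ι : ℝ) - 1) * ((Fintype.card ι : ℝ) ^ 2 + 7 * Fintype.card ι - 6)
        / Fintype.card ι * lam ^ 4 := by
  classical
  have hexpand : ∀ ω, (∑ i, (X i ω - (∑ j, X j ω) / Fintype.card ι) ^ 2) ^ 2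
      = (∑ i, X i ω ^ 2) ^ 2 - 2 / Fintype.card ι * ((∑ i, X i ω ^ 2) * (∑ i, X i ω) ^ 2)
        + 1 / (Fintype.card ι : ℝ) ^ 2 * (∑ i, X i ω) ^ 4 := fun ω => by
    have := Finset.univ.sum_sub_mean_sq (X · ω)
    rw [Finset.card_univ] at this
    rw [this]
    ring
  have hQQ : Integrable (fun ω => (∑ i, X i ω ^ 2) ^ 2) P := by
    simp_rw [sum_sq_sq_eq_sum_mul_monomial]
    exact integrable_finsetSum _ fun i _ => integrable_powerSum_mul_monomial hX hmeas hint 2 _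
  have hQTT : Integrable (fun ω => (∑ i, X i ω ^ 2) * (∑ i, X i ω) ^ 2) P := by
    simp_rw [sum_sq_mul_eq_sum_mul_monomial]
    exact integrable_finsetSum _ fun i _ => integrable_sum_pow_mul_monomial hX hmeas hint 2 _
  have hT4 : Integrable (fun ω => (∑ i, X i ω) ^ 4) P := by
    simpa using integrable_sum_pow_mul_monomial hX hmeas hint 4 0
  have hdiff : Integrable (fun ω => (∑ i, X i ω ^ 2) ^ 2
      - 2 / Fintype.card ι * ((∑ i, X i ω ^ 2) * (∑ i, X i ω) ^ 2)) P :=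
    hQQ.sub (hQTT.const_mul _)
  simp_rw [hexpand]
  rw [integral_add hdiff (hT4.const_mul _),
    integral_sub hQQ (hQTT.const_mul _), integral_const_mul, integral_const_mul,
    integral_sum_sq_sq hX hmeas hint hmom, integral_sum_sq_mul_sum_sq hX hmeas hint hmom,
    integral_sum_pow_four hX hmeas hint hmom]
  rcases eq_or_ne (Fintype.card ι : ℝ) 0 with hn | hn
  · simp [hn]
  · field_simp
    ring

end IIDMoments

open IIDMoments in
theorem expectation_sq_of_sum_sq_dev_of_iid_exponential_general
    {Ω : Type*} [MeasurableSpace Ω] (P : Measure Ω)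
    (n : ℕ) (lam : ℝ) (hlam : 0 < lam)
    (X : Fin n → Ω → ℝ) (hmeas : ∀ i, Measurable (X i))
    (hindep : iIndepFun X P)
    (hdist : ∀ i, Measure.map (X i) P = expMeasure lam⁻¹) :
    ∫ ω, (∑ i, (X i ω - (∑ j, X j ω) / n) ^ 2) ^ 2 ∂P =
      ((n : ℝ) - 1) * ((n : ℝ) ^ 2 + 7 * n - 6) / n * lam ^ 4 := by
  have hrate : 0 < lam⁻¹ := inv_pos.2 hlam
  have hlaw : ∀ i, HasLaw (X i) (expMeasure lam⁻¹) P := fun i => ⟨(hmeas i).aemeasurable, hdist i⟩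
  have hmom : ∀ i k, ∫ ω, X i ω ^ k ∂P = k ! * lam ^ k := fun i k => by
    rw [(hlaw i).integral_pow_of_expMeasure hrate, inv_pow, div_inv_eq_mul]
  simpa using integral_sq_sum_sq_sub_mean hindep hmeas
    (fun i => (hlaw i).integrable_pow_of_expMeasure hrate) hmom

/-- For i.i.d. exponential random variables with mean `lam > 0`, the second moment of the
sum of squared deviations from the sample mean satisfies
`E[S⁴] = ((n - 1)(n² + 7n - 6)/n) λ⁴`. -/
theorem expectation_sq_of_sum_sq_dev_of_iid_exponential
    {Ω : Type*} [MeasurableSpace Ω] (P : Measure Ω) [IsProbabilityMeasure P]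
    (n : ℕ) (hn : 1 ≤ n) (lam : ℝ) (hlam : 0 < lam)
    (X : Fin n → Ω → ℝ) (hmeas : ∀ i, Measurable (X i))
    (hindep : iIndepFun X P)
    (hdist : ∀ i, Measure.map (X i) P = expMeasure lam⁻¹) :
    ∫ ω, (∑ i, (X i ω - (∑ j, X j ω) / n) ^ 2) ^ 2 ∂P =
      ((n : ℝ) - 1) * ((n : ℝ) ^ 2 + 7 * n - 6) / n * lam ^ 4 :=
  expectation_sq_of_sum_sq_dev_of_iid_exponential_general P n lam hlam X hmeas hindep hdist
end

section
/- Let n ≥ 1 and let X₁,…,Xₙ be i.i.d. exponential random variables with mean λ > 0. With T = Σᵢ Xᵢ, X̄ = T/n, and S² = Σᵢ (Xᵢ − X̄)², the conditional expectation of S² given the σ-algebra generated by T satisfies E[S² | T] = ((n − 1)/(n(n + 1))) T² almost surely. -/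
/-!
Since `S² = ∑ Xᵢ² - T²/n`, it suffices to show `E[Xᵢ² | T] = 2T²/(n(n+1))`. A conditional
expectation given `T` can be read off from laws: if the image under `T` of `Xᵢ² · P` is
`h · (law of T)`, then `E[Xᵢ² | T] = h(T)`. Independent gamma variables with a common rate add
up their shapes (the convolution of two gamma densities is a beta integral), so `T ~ Γ(n, r)`
with `r = 1/λ`. Splitting `T = Xᵢ + ∑_{j ≠ i} Xⱼ` and using `x² · Γ(a, r) = (a(a+1)/r²) Γ(a+2, r)`,
the image of `Xᵢ² · P` under `T` is `(2/r²) Γ(3, r) ∗ Γ(n-1, r) = (2/r²) Γ(n+2, r)`, which is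
`(2/(n(n+1))) t² · Γ(n, r)`.
-/

open MeasureTheory ProbabilityTheory Filter Set
open scoped ENNReal

namespace MeasureTheory

lemma map_withDensity_comp {α β : Type*} [MeasurableSpace α] [MeasurableSpace β] {μ : Measure α}
    {f : α → β} (hf : Measurable f) {g : β → ℝ≥0∞} (hg : Measurable g) :
    (μ.withDensity (g ∘ f)).map f = (μ.map f).withDensity g := by
  ext s hs
  rw [Measure.map_apply hf hs, withDensity_apply _ (hf hs), withDensity_apply _ hs,
    setLIntegral_map hs hg hf, Function.comp_def]

theorem condExp_comap_ae_eq_comp_of_map_withDensity {Ω β : Type*} [MeasurableSpace Ω]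
    [MeasurableSpace β] {P : Measure Ω} [IsFiniteMeasure P] {Y : Ω → β} (hY : Measurable Y)
    {f : Ω → ℝ} {h : β → ℝ} (hf : Integrable f P) (hf0 : 0 ≤ f) (hh : Measurable h)
    (hh0 : 0 ≤ h)
    (hmap : (P.withDensity fun ω => ENNReal.ofReal (f ω)).map Y =
      (P.map Y).withDensity fun y => ENNReal.ofReal (h y)) :
    P[f | MeasurableSpace.comap Y inferInstance] =ᵐ[P] h ∘ Y := by
  have hofReal : Measurable fun y => ENNReal.ofReal (h y) := hh.ennreal_ofReal
  have hpre : ∀ B, MeasurableSet B → ∫⁻ ω in Y ⁻¹' B, ENNReal.ofReal (f ω) ∂P =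
      ∫⁻ ω in Y ⁻¹' B, ENNReal.ofReal (h (Y ω)) ∂P := fun B hB => by
    rw [← withDensity_apply _ (hY hB), ← Measure.map_apply hY hB, hmap,
      ← map_withDensity_comp hY hofReal, Measure.map_apply hY hB, withDensity_apply _ (hY hB)]
    rfl
  have hhY0 : 0 ≤ᵐ[P] h ∘ Y := Eventually.of_forall fun ω => hh0 (Y ω)
  have hhY : Integrable (h ∘ Y) P := by
    refine ⟨(hh.comp hY).aestronglyMeasurable, (hasFiniteIntegral_iff_ofReal hhY0).2 ?_⟩
    have htotal := hpre univ MeasurableSet.univ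
    rw [preimage_univ, Measure.restrict_univ] at htotal
    exact htotal ▸ (hasFiniteIntegral_iff_ofReal (Eventually.of_forall hf0)).1 hf.2
  refine (ae_eq_condExp_of_forall_setIntegral_eq hY.comap_le hf (fun _ _ _ => hhY.integrableOn)
    ?_ (hh.comp (comap_measurable Y)).aestronglyMeasurable).symm
  rintro _ ⟨B, hB, rfl⟩ -
  rw [integral_eq_lintegral_of_nonneg_ae (ae_restrict_of_ae hhY0) hhY.1.restrict,
    integral_eq_lintegral_of_nonneg_ae (ae_restrict_of_ae (Eventually.of_forall hf0))
      hf.1.restrict, hpre B hB]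
  rfl

end MeasureTheory

namespace ProbabilityTheory

lemma lintegral_rpow_mul_one_sub_rpow {a b : ℝ} (ha : 0 < a) (hb : 0 < b) :
    ∫⁻ u in Ioo 0 1, ENNReal.ofReal (u ^ (a - 1) * (1 - u) ^ (b - 1)) =
      ENNReal.ofReal (beta a b) := by
  have hB := beta_pos ha hb
  have h := lintegral_betaPDF_eq_one ha hb
  simp_rw [lintegral_betaPDF, mul_assoc, ENNReal.ofReal_mul (one_div_pos.2 hB).le] at h
  rw [lintegral_const_mul' _ _ ENNReal.ofReal_ne_top, one_div,
    ENNReal.ofReal_inv_of_pos hB, mul_comm] at h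
  rw [ENNReal.eq_inv_of_mul_eq_one_left h, inv_inv]

lemma lintegral_Ioo_rpow_mul_sub_rpow {a b x : ℝ} (ha : 0 < a) (hb : 0 < b) (hx : 0 < x) :
    ∫⁻ y in Ioo 0 x, ENNReal.ofReal (y ^ (a - 1) * (x - y) ^ (b - 1)) =
      ENNReal.ofReal (beta a b * x ^ (a + b - 1)) := by
  have hF : Measurable fun y : ℝ => ENNReal.ofReal (y ^ (a - 1) * (x - y) ^ (b - 1)) := by
    fun_prop
  have hscale : ∀ u ∈ Ioo (0:ℝ) 1, ENNReal.ofReal ((x * u) ^ (a - 1) * (x - x * u) ^ (b - 1)) =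
      ENNReal.ofReal (x ^ (a + b - 2)) * ENNReal.ofReal (u ^ (a - 1) * (1 - u) ^ (b - 1)) := by
    rintro u ⟨hu0, hu1⟩
    rw [← ENNReal.ofReal_mul (by positivity), show x - x * u = x * (1 - u) by ring,
      Real.mul_rpow hx.le hu0.le, Real.mul_rpow hx.le (by linarith),
      show a + b - 2 = (a - 1) + (b - 1) by ring, Real.rpow_add hx]
    ring_nf
  have hsubst := setLIntegral_map (μ := volume) (s := Ioo 0 x) measurableSet_Ioo hF
    (measurable_const_mul x)
  rw [Real.map_volume_mul_left hx.ne', Measure.restrict_smul, lintegral_smul_measure,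
    preimage_const_mul_Ioo₀ _ _ hx, zero_div, div_self hx.ne',
    setLIntegral_congr_fun measurableSet_Ioo hscale, lintegral_const_mul' _ _ ENNReal.ofReal_ne_top,
    lintegral_rpow_mul_one_sub_rpow ha hb, abs_of_pos (inv_pos.2 hx), smul_eq_mul] at hsubst
  calc ∫⁻ y in Ioo 0 x, ENNReal.ofReal (y ^ (a - 1) * (x - y) ^ (b - 1))
      = ENNReal.ofReal x * (ENNReal.ofReal x⁻¹ *
          ∫⁻ y in Ioo 0 x, ENNReal.ofReal (y ^ (a - 1) * (x - y) ^ (b - 1))) := by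
        rw [← mul_assoc, ← ENNReal.ofReal_mul hx.le, mul_inv_cancel₀ hx.ne', ENNReal.ofReal_one,
          one_mul]
    _ = ENNReal.ofReal (beta a b * x ^ (a + b - 1)) := by
        rw [hsubst, ← ENNReal.ofReal_mul (by positivity), ← ENNReal.ofReal_mul hx.le,
          show a + b - 1 = 1 + (a + b - 2) by ring, Real.rpow_add hx, Real.rpow_one]
        ring_nf

section Gamma

variable {a b r : ℝ}

lemma measurable_gammaPDF (a r : ℝ) : Measurable (gammaPDF a r) :=
  (measurable_gammaPDFReal a r).ennreal_ofReal

lemma gammaPDF_lconvolution_of_neg {x : ℝ} (hx : x < 0) :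
    (gammaPDF a r ⋆ₗ gammaPDF b r) x = 0 := by
  refine lintegral_eq_zero_of_ae_eq_zero (Eventually.of_forall fun y => ?_)
  rcases lt_or_ge y 0 with hy | hy
  · simp [gammaPDF_of_neg hy]
  · simp [gammaPDF_of_neg (show -y + x < 0 by linarith)]

lemma gammaPDF_lconvolution_of_pos (ha : 0 < a) (hb : 0 < b) (hr : 0 < r) {x : ℝ} (hx : 0 < x) :
    (gammaPDF a r ⋆ₗ gammaPDF b r) x = gammaPDF (a + b) r x := by
  have hΓa := Real.Gamma_pos_of_pos ha
  have hΓb := Real.Gamma_pos_of_pos hb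
  set C := r ^ (a + b) / (Real.Gamma a * Real.Gamma b) * Real.exp (-(r * x))
  have hC : 0 ≤ C := by positivity
  have hsupp : ∀ y, gammaPDF a r y * gammaPDF b r (-y + x) = (Icc 0 x).indicator
      (fun y => ENNReal.ofReal C * ENNReal.ofReal (y ^ (a - 1) * (x - y) ^ (b - 1))) y := by
    intro y
    by_cases hy : y ∈ Icc 0 x
    · have hy0 : 0 ≤ y := hy.1
      rw [indicator_of_mem hy, gammaPDF_of_nonneg hy0, gammaPDF_of_nonneg (by linarith [hy.2]),
        ← ENNReal.ofReal_mul (by positivity), ← ENNReal.ofReal_mul hC]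
      congr 1
      simp only [C, Real.rpow_add hr, neg_add_eq_sub]
      rw [show -(r * x) = -(r * y) + -(r * (x - y)) by ring, Real.exp_add]
      field_simp
    · rw [indicator_of_notMem hy]
      rcases not_and_or.1 hy with hy | hy
      · simp [gammaPDF_of_neg (not_le.1 hy)]
      · simp [gammaPDF_of_neg (show -y + x < 0 by linarith [not_le.1 hy])]
  rw [lconvolution_def, lintegral_congr hsupp, lintegral_indicator measurableSet_Icc,
    ← setLIntegral_congr Ioo_ae_eq_Icc, lintegral_const_mul' _ _ ENNReal.ofReal_ne_top,
    lintegral_Ioo_rpow_mul_sub_rpow ha hb hx, ← ENNReal.ofReal_mul hC,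
    gammaPDF_of_nonneg hx.le, beta]
  congr 1
  simp only [C]
  field_simp

lemma gammaMeasure_conv_gammaMeasure (ha : 0 < a) (hb : 0 < b) (hr : 0 < r) :
    gammaMeasure a r ∗ gammaMeasure b r = gammaMeasure (a + b) r := by
  rw [gammaMeasure, gammaMeasure, gammaMeasure,
    conv_withDensity_eq_lconvolution (measurable_gammaPDF a r) (measurable_gammaPDF b r)]
  refine withDensity_congr_ae ((Measure.ae_ne volume 0).mono fun x hx => ?_)
  rcases hx.lt_or_gt with hx | hx
  · rw [gammaPDF_lconvolution_of_neg hx, gammaPDF_of_neg hx]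
  · exact gammaPDF_lconvolution_of_pos ha hb hr hx

lemma gammaMeasure_withDensity_sq (ha : 0 < a) (hr : 0 < r) :
    (gammaMeasure a r).withDensity (fun x => ENNReal.ofReal (x ^ 2)) =
      ENNReal.ofReal (a * (a + 1) / r ^ 2) • gammaMeasure (a + 2) r := by
  rw [gammaMeasure, gammaMeasure, ← withDensity_mul _ (measurable_gammaPDF a r) (by fun_prop),
    ← withDensity_smul' _ _ ENNReal.ofReal_ne_top]
  congr 1
  ext x
  rcases lt_or_ge x 0 with hx | hx
  · simp [gammaPDF_of_neg hx]
  have hΓ := Real.Gamma_pos_of_pos ha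
  rw [Pi.mul_apply, Pi.smul_apply, gammaPDF_of_nonneg hx, gammaPDF_of_nonneg hx, smul_eq_mul,
    ← ENNReal.ofReal_mul (by positivity), ← ENNReal.ofReal_mul (by positivity)]
  congr 1
  rw [show a + 2 - 1 = (a - 1) + 2 by ring, Real.rpow_add' hx (by linarith),
    show a + 2 = (a + 1) + 1 by ring, Real.Gamma_add_one (by linarith), Real.Gamma_add_one ha.ne',
    Real.rpow_add_one hr.ne', Real.rpow_add_one hr.ne', Real.rpow_two]
  field_simp

end Gamma

lemma IndepFun.map_add_withDensity_comp_left {Ω M : Type*} [MeasurableSpace Ω] {P : Measure Ω}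
    [IsFiniteMeasure P] [AddMonoid M] [MeasurableSpace M] [MeasurableAdd₂ M] {X Y : Ω → M}
    (hX : Measurable X) (hY : Measurable Y) (hXY : IndepFun X Y P) {φ : M → ℝ≥0∞}
    (hφ : Measurable φ) :
    (P.withDensity (φ ∘ X)).map (X + Y) = (P.map X).withDensity φ ∗ P.map Y := by
  rw [Measure.conv, prod_withDensity_left hφ,
    ← (indepFun_iff_map_prod_eq_prod_map_map hX.aemeasurable hY.aemeasurable).1 hXY,
    ← map_withDensity_comp (hX.prodMk hY) (g := fun z : M × M => φ z.1)
      (hφ.comp measurable_fst),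
    Measure.map_map measurable_add (hX.prodMk hY)]
  rfl

lemma iIndepFun.map_sum_eq_gammaMeasure {Ω ι : Type*} [MeasurableSpace Ω] {P : Measure Ω}
    [IsFiniteMeasure P] {X : ι → Ω → ℝ} (hmeas : ∀ i, Measurable (X i))
    (hindep : iIndepFun X P) {a : ι → ℝ} {r : ℝ} (ha : ∀ i, 0 < a i) (hr : 0 < r)
    (hdist : ∀ i, P.map (X i) = gammaMeasure (a i) r) {s : Finset ι} (hs : s.Nonempty) :
    P.map (∑ i ∈ s, X i) = gammaMeasure (∑ i ∈ s, a i) r := by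
  induction hs using Finset.Nonempty.cons_induction with
  | singleton i => simp only [Finset.sum_singleton, hdist]
  | cons j s hj hs ih =>
    have hindep_j : IndepFun (X j) (∑ i ∈ s, X i) P :=
      (hindep.indepFun_finsetSum_of_notMem hmeas hj).symm
    rw [Finset.sum_cons, Finset.sum_cons, hindep_j.map_add_eq_map_conv_map (hmeas j)
      (by simpa only [← Finset.sum_fn] using s.measurable_sum fun i _ => hmeas i), hdist, ih,
      gammaMeasure_conv_gammaMeasure (ha j) (Finset.sum_pos (fun i _ => ha i) hs) hr]

section IidExponential

variable {Ω : Type*} [MeasurableSpace Ω] {P : Measure Ω} {r : ℝ}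

lemma integrable_sq_of_map_eq_gammaMeasure {a : ℝ} (ha : 0 < a) (hr : 0 < r) {Y : Ω → ℝ}
    (hY : Measurable Y) (hlaw : P.map Y = gammaMeasure a r) :
    Integrable (fun ω => Y ω ^ 2) P := by
  have := isProbabilityMeasure_gammaMeasure (by positivity : 0 < a + 2) hr
  refine ⟨(hY.pow_const 2).aestronglyMeasurable,
    (hasFiniteIntegral_iff_ofReal (Eventually.of_forall fun ω => sq_nonneg _)).2 ?_⟩
  rw [← lintegral_map (f := fun x => ENNReal.ofReal (x ^ 2)) (by fun_prop) hY, hlaw,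
    ← setLIntegral_univ, ← withDensity_apply _ MeasurableSet.univ,
    gammaMeasure_withDensity_sq ha hr, Measure.smul_apply, measure_univ, smul_eq_mul, mul_one]
  exact ENNReal.ofReal_lt_top

variable [IsProbabilityMeasure P] {ι : Type*} {X : ι → Ω → ℝ}

lemma iIndepFun.map_finset_sum_eq_gammaMeasure_card (hmeas : ∀ i, Measurable (X i))
    (hindep : iIndepFun X P) (hr : 0 < r) (hdist : ∀ i, P.map (X i) = expMeasure r)
    {s : Finset ι} (hs : s.Nonempty) :
    P.map (fun ω => ∑ i ∈ s, X i ω) = gammaMeasure s.card r := by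
  simpa [← Finset.sum_fn] using
    hindep.map_sum_eq_gammaMeasure hmeas (fun _ => one_pos) hr hdist hs

lemma iIndepFun.map_sum_withDensity_sq [Fintype ι] (hmeas : ∀ i, Measurable (X i))
    (hindep : iIndepFun X P) (hr : 0 < r) (hdist : ∀ i, P.map (X i) = expMeasure r) (i : ι) :
    (P.withDensity fun ω => ENNReal.ofReal (X i ω ^ 2)).map (fun ω => ∑ j, X j ω) =
      ENNReal.ofReal (2 / r ^ 2) • gammaMeasure (Fintype.card ι + 2) r := by
  classical
  set rest : Ω → ℝ := fun ω => ∑ j ∈ Finset.univ.erase i, X j ω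
  have hsplit : (fun ω => ∑ j, X j ω) = X i + rest := by
    ext ω
    exact (Finset.add_sum_erase _ _ (Finset.mem_univ i)).symm
  have hindep_i : IndepFun (X i) rest P := by
    simpa [rest, ← Finset.sum_fn] using
      (hindep.indepFun_finsetSum_of_notMem hmeas (Finset.notMem_erase i Finset.univ)).symm
  have hsq : (P.map (X i)).withDensity (fun x => ENNReal.ofReal (x ^ 2)) =
      ENNReal.ofReal (2 / r ^ 2) • gammaMeasure 3 r := by
    rw [hdist, expMeasure, gammaMeasure_withDensity_sq one_pos hr]
    norm_num
  rw [hsplit, ← Function.comp_def (fun x => ENNReal.ofReal (x ^ 2)) (X i),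
    hindep_i.map_add_withDensity_comp_left (hmeas i) (by fun_prop) (by fun_prop), hsq,
    Measure.conv_smul_left]
  congr 1
  rcases (Finset.univ.erase i).eq_empty_or_nonempty with hempty | hne
  · have hcard : Fintype.card ι = 1 := by
      rw [← Finset.card_univ, ← Finset.card_erase_add_one (Finset.mem_univ i), hempty]; rfl
    have := isProbabilityMeasure_gammaMeasure (by norm_num : (0:ℝ) < 3) hr
    simp only [rest, hempty, Finset.sum_empty, Measure.map_const, measure_univ, one_smul,
      Measure.conv_dirac_zero, hcard]
    norm_num
  · rw [hindep.map_finset_sum_eq_gammaMeasure_card hmeas hr hdist hne,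
      gammaMeasure_conv_gammaMeasure (by norm_num) (by simpa using hne.card_pos) hr,
      Finset.card_erase_of_mem (Finset.mem_univ i), Finset.card_univ,
      Nat.cast_sub (Fintype.card_pos_iff.2 ⟨i⟩)]
    congr 1
    push_cast
    ring

theorem iIndepFun.condExp_sq_comap_sum [Fintype ι] (hmeas : ∀ i, Measurable (X i))
    (hindep : iIndepFun X P) (hr : 0 < r) (hdist : ∀ i, P.map (X i) = expMeasure r) (i : ι) :
    P[fun ω => X i ω ^ 2 | MeasurableSpace.comap (fun ω => ∑ j, X j ω) inferInstance] =ᵐ[P]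
      fun ω => 2 / (Fintype.card ι * (Fintype.card ι + 1)) * (∑ j, X j ω) ^ 2 := by
  have : Nonempty ι := ⟨i⟩
  set n : ℕ := Fintype.card ι
  have hn : (0 : ℝ) < n := Nat.cast_pos.2 Fintype.card_pos
  have hlaw : P.map (fun ω => ∑ j, X j ω) = gammaMeasure n r := by
    simpa using hindep.map_finset_sum_eq_gammaMeasure_card hmeas hr hdist Finset.univ_nonempty
  refine condExp_comap_ae_eq_comp_of_map_withDensity (h := fun t => 2 / (n * (n + 1)) * t ^ 2)
    (Finset.measurable_sum _ fun j _ => hmeas j)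
    (integrable_sq_of_map_eq_gammaMeasure one_pos hr (hmeas i) (hdist i))
    (fun ω => sq_nonneg _) (by fun_prop) (fun t => by positivity) ?_
  have hdensity : (fun t : ℝ => ENNReal.ofReal (2 / (n * (n + 1)) * t ^ 2)) =
      ENNReal.ofReal (2 / (n * (n + 1))) • fun t => ENNReal.ofReal (t ^ 2) := by
    ext t
    rw [Pi.smul_apply, smul_eq_mul, ENNReal.ofReal_mul (by positivity)]
  rw [hindep.map_sum_withDensity_sq hmeas hr hdist i, hlaw, hdensity,
    withDensity_smul' _ _ ENNReal.ofReal_ne_top, gammaMeasure_withDensity_sq hn hr, smul_smul,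
    ← ENNReal.ofReal_mul (by positivity)]
  congr 2
  field_simp

end IidExponential

end ProbabilityTheory

lemma Finset.sum_sub_div_card_sq {ι : Type*} (s : Finset ι) (x : ι → ℝ) :
    ∑ i ∈ s, (x i - (∑ j ∈ s, x j) / s.card) ^ 2 =
      ∑ i ∈ s, x i ^ 2 - (∑ j ∈ s, x j) ^ 2 / s.card := by
  rcases s.eq_empty_or_nonempty with rfl | hs
  · simp
  have hcard : (s.card : ℝ) ≠ 0 := Nat.cast_ne_zero.2 hs.card_pos.ne'
  simp only [sub_sq, Finset.sum_add_distrib, Finset.sum_sub_distrib, Finset.sum_const,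
    nsmul_eq_mul, ← Finset.sum_mul, ← Finset.mul_sum]
  field_simp
  ring

/-- For i.i.d. exponential random variables with mean `lam > 0`, the conditional
expectation of the sum of squared deviations `S²` given the σ-algebra generated by the
sample total `T` satisfies `E[S² | T] = ((n - 1)/(n(n + 1))) T²` almost surely. -/
theorem condexp_sum_sq_dev_given_total_of_iid_exponential
    {Ω : Type*} [MeasurableSpace Ω] (P : Measure Ω) [IsProbabilityMeasure P]
    (n : ℕ) (hn : 1 ≤ n) (lam : ℝ) (hlam : 0 < lam)
    (X : Fin n → Ω → ℝ) (hmeas : ∀ i, Measurable (X i))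
    (hindep : iIndepFun X P)
    (hdist : ∀ i, Measure.map (X i) P = expMeasure lam⁻¹) :
    P[(fun ω => ∑ i, (X i ω - (∑ j, X j ω) / n) ^ 2) |
        MeasurableSpace.comap (fun ω => ∑ i, X i ω) inferInstance] =ᵐ[P]
      fun ω => ((n : ℝ) - 1) / (n * ((n : ℝ) + 1)) * (∑ i, X i ω) ^ 2 := by
  have hr : 0 < lam⁻¹ := inv_pos.2 hlam
  have : Nonempty (Fin n) := Fin.pos_iff_nonempty.1 hn
  have hT : Measurable fun ω => ∑ i, X i ω := Finset.measurable_sum _ fun i _ => hmeas i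
  have hdecomp : (fun ω => ∑ i, (X i ω - (∑ j, X j ω) / n) ^ 2) =
      (∑ i, fun ω => X i ω ^ 2) - fun ω => (∑ i, X i ω) ^ 2 / n := by
    ext ω
    simpa [Finset.sum_apply] using Finset.sum_sub_div_card_sq Finset.univ fun i => X i ω
  have hsq : ∀ i, Integrable (fun ω => X i ω ^ 2) P := fun i =>
    integrable_sq_of_map_eq_gammaMeasure one_pos hr (hmeas i) (hdist i)
  have hT2 : Integrable (fun ω => (∑ i, X i ω) ^ 2 / n) P := by
    refine (integrable_sq_of_map_eq_gammaMeasure (a := n) (by positivity) hr hT ?_).div_const _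
    simpa using hindep.map_finset_sum_eq_gammaMeasure_card hmeas hr hdist Finset.univ_nonempty
  have hT2m : StronglyMeasurable[MeasurableSpace.comap (fun ω => ∑ i, X i ω) inferInstance]
      fun ω => (∑ i, X i ω) ^ 2 / n :=
    ((measurable_id.pow_const 2).div_const _ |>.comp (comap_measurable _)).stronglyMeasurable
  rw [hdecomp]
  filter_upwards [condExp_sub (integrable_finsetSum' _ fun i _ => hsq i) hT2 _,
    condExp_finsetSum (fun i _ => hsq i) _,
    ae_all_iff.2 fun i => hindep.condExp_sq_comap_sum hmeas hr hdist i] with ω hsub hsum hX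
  rw [hsub, Pi.sub_apply, hsum, condExp_of_stronglyMeasurable hT.comap_le hT2m hT2,
    Finset.sum_apply, Finset.sum_congr rfl fun i _ => hX i]
  simp only [Finset.sum_const, Finset.card_univ, Fintype.card_fin, nsmul_eq_mul]
  field_simp
  ring
end

section
/- Let n ≥ 1 and let X₁,…,Xₙ be i.i.d. exponential random variables with mean λ > 0. Then the variance ratio test statistic D = Σᵢ (Xᵢ − X̄)² / X̄² satisfies E[D] = n(n − 1)/(n + 1); in particular E[D] does not depend on λ. -/
/-!
Write `S = ∑ j, X j` and `r = λ⁻¹`. Off a null set `S > 0`, and expanding the square gives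
`D = n² ∑ i, X i² / S² - n`, so it suffices that `E[X i² / S²] = 2 / (n (n + 1))`. Writing
`1 / S² = ∫₀^∞ t e^{-t S} dt` and exchanging the integrals (Tonelli), independence factors
`E[X i² e^{-t S}]` into Laplace transforms of the exponential law, namely
`2 r / (r + t)³ · (r / (r + t))ⁿ⁻¹`, and finally
`∫₀^∞ 2 rⁿ t / (r + t)ⁿ⁺² dt = 2 / (n (n + 1))`.
-/

open MeasureTheory ProbabilityTheory Filter Real Set
open scoped ENNReal Nat Topology

lemma sum_sq_sub_mean_div_sq_mean {ι : Type*} [Fintype ι] [Nonempty ι] (x : ι → ℝ)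
    (hS : ∑ j, x j ≠ 0) :
    (∑ i, (x i - (∑ j, x j) / Fintype.card ι) ^ 2) / ((∑ j, x j) / Fintype.card ι) ^ 2 =
      Fintype.card ι ^ 2 * ∑ i, x i ^ 2 / (∑ j, x j) ^ 2 - Fintype.card ι := by
  have hn : (Fintype.card ι : ℝ) ≠ 0 := Nat.cast_ne_zero.2 Fintype.card_ne_zero
  have hsum_sq : ∑ i, (x i - (∑ j, x j) / Fintype.card ι) ^ 2 =
      ∑ i, x i ^ 2 - (∑ j, x j) ^ 2 / Fintype.card ι := by
    simp_rw [sub_sq, Finset.sum_add_distrib, Finset.sum_sub_distrib, ← Finset.sum_mul,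
      ← Finset.mul_sum, Finset.sum_const, Finset.card_univ, nsmul_eq_mul]
    field_simp
    ring
  rw [hsum_sq, ← Finset.sum_div]
  field_simp

lemma sum_sq_div_sq_sum_le_one {ι : Type*} [Fintype ι] {x : ι → ℝ} (hx : ∀ i, 0 ≤ x i) :
    ∑ i, x i ^ 2 / (∑ j, x j) ^ 2 ≤ 1 := by
  rw [← Finset.sum_div]
  exact div_le_one_of_le₀ (Finset.sum_sq_le_sq_sum_of_nonneg fun i _ => hx i) (sq_nonneg _)

@[fun_prop]
lemma measurable_gammaPDF (a r : ℝ) : Measurable (gammaPDF a r) :=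
  (measurable_gammaPDFReal a r).ennreal_ofReal

lemma gammaPDF_natCast_add_one_of_nonneg (k : ℕ) (r : ℝ) {x : ℝ} (hx : 0 ≤ x) :
    gammaPDF (k + 1) r x = ENNReal.ofReal (r ^ (k + 1) / k ! * (x ^ k * exp (-(r * x)))) := by
  rw [gammaPDF_of_nonneg hx, add_sub_cancel_right, Gamma_nat_eq_factorial, mul_assoc]
  norm_cast

lemma lintegral_gammaPDF_Ioi_eq_one {a r : ℝ} (ha : 0 < a) (hr : 0 < r) :
    ∫⁻ x in Ioi 0, gammaPDF a r x = 1 := by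
  rw [setLIntegral_congr Ioi_ae_eq_Ici, setLIntegral_eq_of_support_subset,
    lintegral_gammaPDF_eq_one ha hr]
  exact Function.support_subset_iff'.2 fun x hx => gammaPDF_of_neg (not_le.1 hx)

lemma lintegral_pow_mul_exp_neg_mul_Ioi (k : ℕ) {S : ℝ} (hS : 0 < S) :
    ∫⁻ t in Ioi 0, ENNReal.ofReal (t ^ k * exp (-(S * t))) =
      ENNReal.ofReal (k ! / S ^ (k + 1)) := by
  have hdensity : ∀ t ∈ Ioi (0 : ℝ), ENNReal.ofReal (t ^ k * exp (-(S * t))) =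
      ENNReal.ofReal (k ! / S ^ (k + 1)) * gammaPDF (k + 1) S t := fun t ht => by
    rw [gammaPDF_natCast_add_one_of_nonneg k S (le_of_lt ht),
      ← ENNReal.ofReal_mul (by positivity)]
    congr 1
    field_simp
  rw [setLIntegral_congr_fun measurableSet_Ioi hdensity, lintegral_const_mul _ (by fun_prop),
    lintegral_gammaPDF_Ioi_eq_one (by positivity) hS, mul_one]

lemma lintegral_pow_mul_exp_neg_mul_expMeasure (k : ℕ) {r t : ℝ} (hr : 0 < r) (ht : 0 ≤ t) :
    ∫⁻ y, ENNReal.ofReal (y ^ k * exp (-(t * y))) ∂expMeasure r =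
      ENNReal.ofReal (r * k ! / (r + t) ^ (k + 1)) := by
  have hdensity : ∀ y, gammaPDF 1 r y * ENNReal.ofReal (y ^ k * exp (-(t * y))) =
      ENNReal.ofReal (r * k ! / (r + t) ^ (k + 1)) * gammaPDF (k + 1) (r + t) y := fun y => by
    rcases lt_or_ge y 0 with hy | hy
    · simp [gammaPDF_of_neg hy]
    · have h1 := gammaPDF_natCast_add_one_of_nonneg 0 r hy
      rw [Nat.cast_zero, zero_add] at h1
      rw [h1, gammaPDF_natCast_add_one_of_nonneg k (r + t) hy,
        ← ENNReal.ofReal_mul (by positivity), ← ENNReal.ofReal_mul (by positivity)]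
      congr 1
      have : exp (-((r + t) * y)) = exp (-(r * y)) * exp (-(t * y)) := by
        rw [← exp_add]
        ring_nf
      rw [this]
      field_simp
      ring
  rw [expMeasure, gammaMeasure,
    lintegral_withDensity_eq_lintegral_mul _ (by fun_prop) (by fun_prop)]
  simp_rw [Pi.mul_apply, hdensity]
  rw [lintegral_const_mul _ (by fun_prop),
    lintegral_gammaPDF_eq_one (by positivity) (by positivity), mul_one]

lemma ae_pos_expMeasure (r : ℝ) : ∀ᵐ y ∂expMeasure r, 0 < y := by
  rw [expMeasure, gammaMeasure, ae_withDensity_iff (by fun_prop)]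
  filter_upwards [Measure.ae_ne volume 0] with y hy0 hy
  exact lt_of_le_of_ne (not_lt.1 fun hy' => hy (gammaPDF_of_neg hy')) hy0.symm

lemma lintegral_div_add_pow_Ioi {r : ℝ} (hr : 0 < r) {n : ℕ} (hn : n ≠ 0) :
    ∫⁻ t in Ioi 0, ENNReal.ofReal (t / (r + t) ^ (n + 2)) =
      ENNReal.ofReal (1 / (n * (n + 1) * r ^ n)) := by
  have hn' : (n : ℝ) ≠ 0 := by exact_mod_cast hn
  -- an antiderivative, since `t / (r + t)ⁿ⁺² = (r + t)⁻ⁿ⁻¹ - r (r + t)⁻ⁿ⁻²`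
  set F : ℝ → ℝ := fun u =>
    r / (n + 1) * (r + u) ^ (-(n + 1 : ℤ)) - (r + u) ^ (-n : ℤ) / n
  have hderiv : ∀ t ∈ Ici (0 : ℝ), HasDerivAt F (t / (r + t) ^ (n + 2)) t := by
    intro t (ht : 0 ≤ t)
    have hrt : r + t ≠ 0 := by positivity
    have hzpow (k : ℤ) : HasDerivAt (fun u => (r + u) ^ k) (k * (r + t) ^ (k - 1)) t :=
      (hasDerivAt_zpow k (r + t) (Or.inl hrt)).comp_const_add r t
    refine (((hzpow _).const_mul (r / (n + 1))).sub ((hzpow _).div_const (n : ℝ))).congr_deriv ?_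
    rw [show -(n + 1 : ℤ) - 1 = -((n + 2 : ℕ) : ℤ) by push_cast; ring,
      show (-n : ℤ) - 1 = -((n + 1 : ℕ) : ℤ) by push_cast; ring, zpow_neg, zpow_neg,
      zpow_natCast, zpow_natCast]
    push_cast
    field_simp
    ring
  have hnonneg : ∀ t ∈ Ioi (0 : ℝ), 0 ≤ t / (r + t) ^ (n + 2) := fun t (ht : 0 < t) => by
    positivity
  have hlim : Tendsto F atTop (𝓝 0) := by
    have hrt : Tendsto (fun u : ℝ => r + u) atTop atTop :=
      tendsto_atTop_add_const_left _ r tendsto_id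
    have h1 := (tendsto_zpow_atTop_zero (by omega : -(n + 1 : ℤ) < 0)).comp hrt
    have h2 := (tendsto_zpow_atTop_zero (by omega : (-n : ℤ) < 0)).comp hrt
    have := (h1.const_mul (r / (n + 1))).sub (h2.div_const (n : ℝ))
    rwa [mul_zero, zero_div, sub_zero] at this
  rw [← ofReal_integral_eq_lintegral_ofReal
    (integrableOn_Ioi_deriv_of_nonneg' hderiv hnonneg hlim)
    ((ae_restrict_iff' measurableSet_Ioi).2 (ae_of_all _ hnonneg)),
    integral_Ioi_of_hasDerivAt_of_nonneg' hderiv hnonneg hlim]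
  simp only [F, add_zero, zpow_neg, zpow_natCast]
  congr 1
  rw [show ((n + 1 : ℤ)) = ((n + 1 : ℕ) : ℤ) by push_cast; ring, zpow_natCast]
  field_simp
  ring

section IIDExponential

variable {Ω ι : Type*} [MeasurableSpace Ω] {P : Measure Ω} [Fintype ι]
  {X : ι → Ω → ℝ} {r : ℝ}

lemma ae_pos_of_map_eq_expMeasure {Y : Ω → ℝ} (hY : AEMeasurable Y P)
    (hdist : P.map Y = expMeasure r) : ∀ᵐ ω ∂P, 0 < Y ω :=
  ae_of_ae_map hY (hdist ▸ ae_pos_expMeasure r)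

lemma lintegral_sq_mul_exp_neg_mul_sum {t : ℝ} (hr : 0 < r) (ht : 0 ≤ t)
    (hmeas : ∀ i, Measurable (X i)) (hindep : iIndepFun X P)
    (hdist : ∀ i, P.map (X i) = expMeasure r) (i : ι) :
    ∫⁻ ω, ENNReal.ofReal (X i ω ^ 2 * exp (-(t * ∑ j, X j ω))) ∂P =
      ENNReal.ofReal (2 * r ^ Fintype.card ι / (r + t) ^ (Fintype.card ι + 2)) := by
  classical
  set k : ι → ℕ := fun j => if j = i then 2 else 0
  have hfactor : ∀ ω, ENNReal.ofReal (X i ω ^ 2 * exp (-(t * ∑ j, X j ω))) =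
      ∏ j, ENNReal.ofReal (X j ω ^ k j * exp (-(t * X j ω))) := fun ω => by
    rw [← ENNReal.ofReal_prod_of_nonneg fun j _ => by dsimp only [k]; split_ifs <;> positivity,
      Finset.prod_mul_distrib, ← exp_sum, Finset.mul_sum, ← Finset.sum_neg_distrib]
    simp [k, pow_ite]
  have hmeas' : ∀ j, Measurable fun y : ℝ => ENNReal.ofReal (y ^ k j * exp (-(t * y))) :=
    fun j => by fun_prop
  simp_rw [hfactor]
  rw [lintegral_prod_eq_prod_lintegral_of_indepFun Finset.univ
    (fun j ω => ENNReal.ofReal (X j ω ^ k j * exp (-(t * X j ω)))) (hindep.comp _ hmeas')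
    fun j => (hmeas' j).comp (hmeas j)]
  simp_rw [← lintegral_map (hmeas' _) (hmeas _), hdist,
    lintegral_pow_mul_exp_neg_mul_expMeasure _ hr ht]
  rw [← ENNReal.ofReal_prod_of_nonneg fun j _ => by positivity]
  congr 1
  rw [Finset.prod_div_distrib, Finset.prod_mul_distrib, Finset.prod_pow_eq_pow_sum]
  simp only [Finset.prod_const, Finset.card_univ, apply_ite, Nat.factorial_two,
    Nat.factorial_zero, Nat.cast_ofNat, Nat.cast_one, Finset.prod_ite_eq', Finset.mem_univ,
    ↓reduceIte, Finset.sum_add_distrib, Finset.sum_ite_eq', Finset.sum_const, smul_eq_mul,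
    mul_one, k]
  ring

lemma lintegral_sq_div_sq_sum (hr : 0 < r) (hmeas : ∀ i, Measurable (X i))
    (hindep : iIndepFun X P) (hdist : ∀ i, P.map (X i) = expMeasure r) (i : ι) :
    ∫⁻ ω, ENNReal.ofReal (X i ω ^ 2 / (∑ j, X j ω) ^ 2) ∂P =
      ENNReal.ofReal (2 / (Fintype.card ι * (Fintype.card ι + 1))) := by
  have := hindep.isProbabilityMeasure
  set n := Fintype.card ι
  have hn : n ≠ 0 := (Fintype.card_pos_iff.2 ⟨i⟩).ne'
  have hsum_pos : ∀ᵐ ω ∂P, 0 < ∑ j, X j ω := by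
    filter_upwards [ae_all_iff.2 fun j =>
      ae_pos_of_map_eq_expMeasure (hmeas j).aemeasurable (hdist j)] with ω hω
    exact Finset.sum_pos (fun j _ => hω j) ⟨i, Finset.mem_univ i⟩
  have hlaplace : ∀ᵐ ω ∂P, ENNReal.ofReal (X i ω ^ 2 / (∑ j, X j ω) ^ 2) =
      ∫⁻ t in Ioi 0,
        ENNReal.ofReal t * ENNReal.ofReal (X i ω ^ 2 * exp (-(t * ∑ j, X j ω))) := by
    filter_upwards [hsum_pos] with ω hS
    have hfactor : ∀ t ∈ Ioi (0 : ℝ), ENNReal.ofReal t *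
        ENNReal.ofReal (X i ω ^ 2 * exp (-(t * ∑ j, X j ω))) =
        ENNReal.ofReal (X i ω ^ 2) * ENNReal.ofReal (t ^ 1 * exp (-((∑ j, X j ω) * t))) :=
      fun t (ht : 0 < t) => by
        rw [← ENNReal.ofReal_mul ht.le, ← ENNReal.ofReal_mul (sq_nonneg _), mul_comm t]
        ring_nf
    rw [setLIntegral_congr_fun measurableSet_Ioi hfactor, lintegral_const_mul _ (by fun_prop),
      lintegral_pow_mul_exp_neg_mul_Ioi 1 hS, ← ENNReal.ofReal_mul (sq_nonneg _)]
    simp [div_eq_mul_inv]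
  have hswap_meas : Measurable (Function.uncurry fun ω t =>
      ENNReal.ofReal t * ENNReal.ofReal (X i ω ^ 2 * exp (-(t * ∑ j, X j ω)))) := by
    fun_prop
  calc ∫⁻ ω, ENNReal.ofReal (X i ω ^ 2 / (∑ j, X j ω) ^ 2) ∂P
      = ∫⁻ t in Ioi 0, ∫⁻ ω, ENNReal.ofReal t *
          ENNReal.ofReal (X i ω ^ 2 * exp (-(t * ∑ j, X j ω))) ∂P := by
        rw [lintegral_congr_ae hlaplace, lintegral_lintegral_swap hswap_meas.aemeasurable]
    _ = ∫⁻ t in Ioi 0, ENNReal.ofReal (2 * r ^ n) * ENNReal.ofReal (t / (r + t) ^ (n + 2)) := by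
        refine setLIntegral_congr_fun measurableSet_Ioi fun t (ht : 0 < t) => ?_
        rw [lintegral_const_mul _ (by fun_prop),
          lintegral_sq_mul_exp_neg_mul_sum hr ht.le hmeas hindep hdist i,
          ← ENNReal.ofReal_mul ht.le, ← ENNReal.ofReal_mul (by positivity)]
        congr 1
        ring
    _ = ENNReal.ofReal (2 / (n * (n + 1))) := by
        rw [lintegral_const_mul _ (by fun_prop), lintegral_div_add_pow_Ioi hr hn,
          ← ENNReal.ofReal_mul (by positivity)]
        congr 1
        field_simp

lemma integral_sum_sq_div_sq_sum [Nonempty ι] (hr : 0 < r) (hmeas : ∀ i, Measurable (X i))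
    (hindep : iIndepFun X P) (hdist : ∀ i, P.map (X i) = expMeasure r) :
    ∫ ω, ∑ i, X i ω ^ 2 / (∑ j, X j ω) ^ 2 ∂P = 2 / (Fintype.card ι + 1) := by
  have hn : (Fintype.card ι : ℝ) ≠ 0 := Nat.cast_ne_zero.2 Fintype.card_ne_zero
  rw [integral_eq_lintegral_of_nonneg_ae (ae_of_all _ fun ω => by positivity)
    (Measurable.aestronglyMeasurable (by fun_prop)),
    lintegral_congr fun ω => ENNReal.ofReal_sum_of_nonneg fun i _ => by positivity,
    lintegral_finsetSum _ fun i _ => by fun_prop]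
  simp_rw [lintegral_sq_div_sq_sum hr hmeas hindep hdist]
  rw [Finset.sum_const, Finset.card_univ, nsmul_eq_mul, ENNReal.toReal_mul, ENNReal.toReal_natCast,
    ENNReal.toReal_ofReal (by positivity)]
  field_simp

end IIDExponential

/-- For i.i.d. exponential random variables with mean `lam > 0`, the variance ratio test
statistic `D = ∑ i, (X i - X̄)² / X̄²` satisfies `E[D] = n(n - 1)/(n + 1)`; in
particular `E[D]` does not depend on `lam`. -/
theorem expectation_variance_ratio_stat_of_iid_exponential
    {Ω : Type*} [MeasurableSpace Ω] (P : Measure Ω) [IsProbabilityMeasure P]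
    (n : ℕ) (hn : 1 ≤ n) (lam : ℝ) (hlam : 0 < lam)
    (X : Fin n → Ω → ℝ) (hmeas : ∀ i, Measurable (X i))
    (hindep : iIndepFun X P)
    (hdist : ∀ i, Measure.map (X i) P = expMeasure lam⁻¹) :
    ∫ ω, (∑ i, (X i ω - (∑ j, X j ω) / n) ^ 2) / ((∑ j, X j ω) / n) ^ 2 ∂P =
      (n : ℝ) * ((n : ℝ) - 1) / ((n : ℝ) + 1) := by
  have : Nonempty (Fin n) := ⟨⟨0, hn⟩⟩
  have hpos : ∀ᵐ ω ∂P, ∀ i, 0 < X i ω :=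
    ae_all_iff.2 fun i => ae_pos_of_map_eq_expMeasure (hmeas i).aemeasurable (hdist i)
  set g : Ω → ℝ := fun ω => ∑ i, X i ω ^ 2 / (∑ j, X j ω) ^ 2
  have hD : ∀ᵐ ω ∂P, (∑ i, (X i ω - (∑ j, X j ω) / n) ^ 2) /
      ((∑ j, X j ω) / n) ^ 2 = n ^ 2 * g ω - n := by
    filter_upwards [hpos] with ω hω
    simpa using sum_sq_sub_mean_div_sq_mean (X · ω)
      (Finset.sum_pos (fun j _ => hω j) Finset.univ_nonempty).ne'
  have hg : Integrable g P := by
    refine (integrable_const 1).mono' (Measurable.aestronglyMeasurable (by fun_prop)) ?_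
    filter_upwards [hpos] with ω hω
    rw [Real.norm_of_nonneg (by positivity)]
    exact sum_sq_div_sq_sum_le_one fun i => (hω i).le
  rw [integral_congr_ae hD, integral_sub (hg.const_mul _) (integrable_const _), integral_const_mul,
    integral_sum_sq_div_sq_sum (inv_pos.2 hlam) hmeas hindep hdist]
  simp only [Fintype.card_fin, integral_const, probReal_univ, smul_eq_mul, one_mul]
  field_simp
  ring
end
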